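/- arXiv:2511.11069 — 3 statements merged into one kernel-verified Lean document; each statement's English description precedes it below -/
import Mathlib

section
/- If x, y are real numbers with x > 1 and y > 1, then x·y ≤ e↑↑(ln*(x) + ln*(y)). -/
open Real Filter

noncomputable def tet : ℕ → ℝ
  | 0 => 1
  | n + 1 => Real.exp (tet n)

noncomputable def lnStar (x : ℝ) : ℕ := sInf {n : ℕ | Real.log^[n] x ≤ 1}

lemma one_le_tet (n : ℕ) : 1 ≤ tet n := by
  induction n with
  | zero => simp [tet]
  | succ n ih =>
    simp only [tet]
    exact Real.one_le_exp (by linarith)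

lemma le_tet_of_iter_log (n : ℕ) : ∀ x : ℝ, Real.log^[n] x ≤ 1 → x ≤ tet n := by
  induction n with
  | zero => intro x h; simpa [tet] using h
  | succ n ih =>
    intro x h
    rw [Function.iterate_succ_apply] at h
    have hlog : Real.log x ≤ tet n := ih _ h
    rcases le_or_gt x 0 with hx | hx
    · exact hx.trans (by have := one_le_tet (n+1); linarith)
    · calc x = Real.exp (Real.log x) := (Real.exp_log hx).symm
        _ ≤ Real.exp (tet n) := Real.exp_le_exp.mpr hlog
        _ = tet (n + 1) := rfl

lemma exists_iter_log_le (x : ℝ) : ∃ n, Real.log^[n] x ≤ 1 := by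
  have aux : ∀ n : ℕ, (∃ m, Real.log^[m] x ≤ 1) ∨ Real.log^[n] x ≤ x - n := by
    intro n
    induction n with
    | zero => right; simp
    | succ n ih =>
      rcases ih with h | h
      · left; exact h
      · by_cases h1 : Real.log^[n] x ≤ 1
        · left; exact ⟨n, h1⟩
        · push_neg at h1
          right
          rw [Function.iterate_succ_apply']
          have := Real.log_le_sub_one_of_pos (by linarith : (0:ℝ) < Real.log^[n] x)
          push_cast
          linarith
  rcases aux ⌈x⌉₊ with h | h
  · exact h
  · exact ⟨⌈x⌉₊, by have := Nat.le_ceil x; linarith⟩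

lemma le_tet_lnStar (x : ℝ) : x ≤ tet (lnStar x) := by
  have hne : {n : ℕ | Real.log^[n] x ≤ 1}.Nonempty := exists_iter_log_le x
  have hmem := Nat.sInf_mem hne
  exact le_tet_of_iter_log _ _ hmem

lemma one_le_lnStar {x : ℝ} (hx : 1 < x) : 1 ≤ lnStar x := by
  by_contra h
  push_neg at h
  interval_cases h' : lnStar x
  · have hne : {n : ℕ | Real.log^[n] x ≤ 1}.Nonempty := exists_iter_log_le x
    have hmem := Nat.sInf_mem hne
    rw [show sInf {n : ℕ | Real.log^[n] x ≤ 1} = lnStar x from rfl, h'] at hmem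
    simp only [Set.mem_setOf_eq, Function.iterate_zero_apply] at hmem
    linarith

lemma tet_add (a b : ℕ) (ha : 1 ≤ a) (hb : 1 ≤ b) : tet a * tet b ≤ tet (a + b) := by
  induction b with
  | zero => omega
  | succ b ih =>
    have hta : 1 ≤ tet a := one_le_tet a
    rcases Nat.eq_or_lt_of_le hb with hb1 | hb1
    · -- b + 1 = 1, i.e. b = 0
      have hb0 : b = 0 := by omega
      subst hb0
      show tet a * tet 1 ≤ tet (a + 1)
      have hpos : (0:ℝ) < tet a := by linarith
      have hlog : Real.log (tet a) ≤ tet a - 1 := Real.log_le_sub_one_of_pos hpos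
      have : tet a * tet 1 = Real.exp (Real.log (tet a) + 1) := by
        rw [Real.exp_add, Real.exp_log hpos]
        simp [tet]
      rw [this]
      show Real.exp (Real.log (tet a) + 1) ≤ Real.exp (tet a)
      exact Real.exp_le_exp.mpr (by linarith)
    · have hb' : 1 ≤ b := by omega
      have ih' := ih hb'
      obtain ⟨a', rfl⟩ : ∃ a', a = a' + 1 := ⟨a - 1, by omega⟩
      have htb : 1 ≤ tet b := one_le_tet b
      have hta' : 1 ≤ tet a' := one_le_tet a'
      have hpos : (0:ℝ) < tet (a' + 1) := by linarith
      have hlog : Real.log (tet (a' + 1)) = tet a' := by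
        simp [tet]
      have hstep : tet a' + 1 ≤ tet (a' + 1) := by
        have := Real.add_one_le_exp (tet a')
        simpa [tet] using this
      have key : tet a' + tet b ≤ tet (a' + 1) * tet b := by nlinarith
      calc tet (a' + 1) * tet (b + 1) = Real.exp (Real.log (tet (a' + 1)) + tet b) := by
              rw [Real.exp_add, Real.exp_log hpos]; simp [tet]
        _ = Real.exp (tet a' + tet b) := by rw [hlog]
        _ ≤ Real.exp (tet (a' + 1) * tet b) := Real.exp_le_exp.mpr key
        _ ≤ Real.exp (tet (a' + 1 + b)) := Real.exp_le_exp.mpr ih'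
        _ = tet (a' + 1 + (b + 1)) := rfl

theorem stmt6 (x y : ℝ) (hx : 1 < x) (hy : 1 < y) :
    x * y ≤ tet (lnStar x + lnStar y) := by
  have h1 : x ≤ tet (lnStar x) := le_tet_lnStar x
  have h2 : y ≤ tet (lnStar y) := le_tet_lnStar y
  have : x * y ≤ tet (lnStar x) * tet (lnStar y) :=
    mul_le_mul h1 h2 (by linarith) (by linarith)
  exact this.trans (tet_add _ _ (one_le_lnStar hx) (one_le_lnStar hy))
end

section
/- If x, y are real numbers with x > 1 and y > 1, then x^y ≤ e↑↑(ln*(x) + ln*(y)). -/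
open Real Filter

lemma tet_mono : Monotone tet := by
  apply monotone_nat_of_le_succ
  intro n
  have h := Real.add_one_le_exp (tet n)
  simp only [tet]
  linarith

lemma tet_add_tet_le (p q : ℕ) : tet p + tet q ≤ tet (p + q + 1) := by
  have h1 : tet p ≤ tet (max p q) := tet_mono (le_max_left p q)
  have h2 : tet q ≤ tet (max p q) := tet_mono (le_max_right p q)
  have h3 : 1 ≤ tet (max p q) := one_le_tet _
  have h4 : 2 * tet (max p q) ≤ Real.exp (tet (max p q)) := by
    set t := tet (max p q)
    have he : Real.exp t = Real.exp (t - 1) * Real.exp 1 := by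
      rw [← Real.exp_add]; ring_nf
    have h5 : t - 1 + 1 ≤ Real.exp (t - 1) := Real.add_one_le_exp _
    have h6 : (2 : ℝ) ≤ Real.exp 1 := by
      have := Real.exp_one_gt_d9; linarith
    calc 2 * t ≤ Real.exp (t - 1) * Real.exp 1 := by nlinarith [Real.exp_pos (t - 1)]
      _ = Real.exp t := he.symm
  have h7 : Real.exp (tet (max p q)) = tet (max p q + 1) := rfl
  have h8 : tet (max p q + 1) ≤ tet (p + q + 1) := by
    apply tet_mono
    omega
  linarith

lemma tet_mul_tet_le (p q : ℕ) (hq : 1 ≤ q) : tet p * tet q ≤ tet (p + q) := by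
  induction p with
  | zero => simp [tet]
  | succ p ih =>
    obtain ⟨q', rfl⟩ : ∃ q', q = q' + 1 := ⟨q - 1, by omega⟩
    have : tet (p + 1) * tet (q' + 1) = Real.exp (tet p + tet q') := by
      simp [tet, ← Real.exp_add]
    rw [this]
    have h := tet_add_tet_le p q'
    have : tet (p + 1 + (q' + 1)) = Real.exp (tet (p + q' + 1)) := by
      have : p + 1 + (q' + 1) = (p + q' + 1) + 1 := by omega
      rw [this]; rfl
    rw [this]
    exact Real.exp_le_exp.2 h

lemma lnStar_spec (x : ℝ) : Real.log^[lnStar x] x ≤ 1 :=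
  Nat.sInf_mem (exists_iter_log_le x)

theorem stmt7 (x y : ℝ) (hx : 1 < x) (hy : 1 < y) :
    x ^ y ≤ tet (lnStar x + lnStar y) := by
  have ha1 : 1 ≤ lnStar x := one_le_lnStar hx
  have hb1 : 1 ≤ lnStar y := one_le_lnStar hy
  obtain ⟨a', haa⟩ : ∃ a', lnStar x = a' + 1 := ⟨lnStar x - 1, by omega⟩
  set b := lnStar y with hb
  rw [haa]
  have hxa : Real.log^[a' + 1] x ≤ 1 := haa ▸ lnStar_spec x
  rw [Function.iterate_succ_apply] at hxa
  have hlogx : Real.log x ≤ tet a' := le_tet_of_iter_log a' _ hxa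
  have hylt : y ≤ tet b := le_tet_of_iter_log b _ (lnStar_spec y)
  have hlogpos : 0 < Real.log x := Real.log_pos hx
  have hmul : Real.log x * y ≤ tet a' * tet b := by
    have h1 : 0 ≤ tet a' := by linarith [one_le_tet a']
    exact mul_le_mul hlogx hylt (by linarith) h1
  have hsub : tet a' * tet b ≤ tet (a' + b) := tet_mul_tet_le a' b hb1
  calc x ^ y = Real.exp (Real.log x * y) := Real.rpow_def_of_pos (by linarith) y
    _ ≤ Real.exp (tet (a' + b)) := Real.exp_le_exp.2 (by linarith)
    _ = tet (a' + b + 1) := rfl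
    _ = tet (a' + 1 + b) := by ring_nf
end

section
/- Let q ≥ 2 be an integer, 1/2 < λ < 1, c₂ ≥ 1, and δ > 1 real. Then there exist real constants c₃, c₄ ≥ 1 such that: for all real α > c₃, all real K > c₄, and all integers n ≥ e^{α^δ · ln K}, setting σ_n = c₂·n/ln n, one has K^{σ_n} · q^{(n+σ_n)/(2α)} · (c₂ ln n)^{σ_n} ≤ q^{n/(2αλ)}. -/
open Real Filter

private lemma aux1 (c N k P L : ℝ) (hcN : 0 ≤ c * N) (hP : 0 < P) (hL : 0 < L)
    (h : P * k ≤ L) : c * N * k / L ≤ c * N / P := by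
  rw [div_le_div_iff₀ hL hP]
  nlinarith [mul_le_mul_of_nonneg_left h hcN]

private lemma aux2 (c N ε α P : ℝ) (hN : 0 ≤ N) (hα : 0 < α) (hP : 0 < P)
    (h : 3 * c ≤ ε * P) : c * N / (P * α) ≤ ε / 3 * (N / α) := by
  have he : ε / 3 * (N / α) = ε * N / (3 * α) := by ring
  rw [he, div_le_div_iff₀ (mul_pos hP hα) (by linarith)]
  nlinarith [mul_le_mul_of_nonneg_right h (mul_nonneg hN hα.le)]

private lemma aux3 (c lq N L ε α : ℝ) (hN : 0 ≤ N) (hL : 0 < L) (hα : 0 < α)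
    (h : 3 * c * lq ≤ 2 * ε * L) : lq * (c * N / L / (2 * α)) ≤ ε / 3 * (N / α) := by
  have he1 : lq * (c * N / L / (2 * α)) = c * lq * N / (L * (2 * α)) := by ring
  have he2 : ε / 3 * (N / α) = ε * N / (3 * α) := by ring
  rw [he1, he2, div_le_div_iff₀ (mul_pos hL (by linarith)) (by linarith)]
  nlinarith [mul_le_mul_of_nonneg_right h (mul_nonneg hN hα.le)]

private lemma aux4 (u a b t c N ε L : ℝ) (ht : 0 < t) (ha : 0 < a) (hb : 0 < b)
    (hN : 0 ≤ N) (hL : L = a * b * a) (hkey : 3 * c * u ≤ ε * t * a) :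
    (u * a / t) * (c * N / L) ≤ ε / 3 * (N / b) := by
  subst hL
  have he1 : (u * a / t) * (c * N / (a * b * a)) = u * c * N / (t * (b * a)) := by
    field_simp
  have he2 : ε / 3 * (N / b) = ε * N / (3 * b) := by ring
  rw [he1, he2, div_le_div_iff₀ (by positivity) (by linarith)]
  nlinarith [mul_le_mul_of_nonneg_right hkey (mul_nonneg hN hb.le)]

private lemma aux5 (ε N b α : ℝ) (hε : 0 ≤ ε) (hN : 0 ≤ N) (hα : 0 < α) (h : α ≤ b) :
    ε / 3 * (N / b) ≤ ε / 3 * (N / α) := by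
  have hb : 0 < b := lt_of_lt_of_le hα h
  apply mul_le_mul_of_nonneg_left _ (by linarith)
  rw [div_le_div_iff₀ hb hα]
  nlinarith

private lemma aux6 (c u t ε a : ℝ) (ht : 0 < t) (hε : 0 < ε) (h : 3 * (c * u / t) / ε ≤ a) :
    3 * c * u ≤ ε * t * a := by
  have h1 : 3 * (c * u / t) ≤ a * ε := (div_le_iff₀ hε).mp h
  have h2 : (3 * c * u) / t ≤ a * ε := by
    rw [show (3 * c * u) / t = 3 * (c * u / t) by ring]
    exact h1
  have h3 := (div_le_iff₀ ht).mp h2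
  nlinarith

set_option maxHeartbeats 1000000 in
theorem stmt13 (q : ℕ) (hq : 2 ≤ q) (l : ℝ) (hl1 : 1 / 2 < l) (hl2 : l < 1)
    (c₂ : ℝ) (hc₂ : 1 ≤ c₂) (δ : ℝ) (hδ : 1 < δ) :
    ∃ c₃ c₄ : ℝ, 1 ≤ c₃ ∧ 1 ≤ c₄ ∧
      ∀ α K : ℝ, c₃ < α → c₄ < K →
        ∀ n : ℕ, Real.exp (α ^ δ * Real.log K) ≤ (n : ℝ) →
          K ^ (c₂ * n / Real.log n) *
              (q : ℝ) ^ (((n : ℝ) + c₂ * n / Real.log n) / (2 * α)) *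
              (c₂ * Real.log n) ^ (c₂ * n / Real.log n)
            ≤ (q : ℝ) ^ ((n : ℝ) / (2 * α * l)) := by
  have hq1 : (1 : ℝ) < (q : ℝ) := by exact_mod_cast lt_of_lt_of_le one_lt_two hq
  have hq0 : (0 : ℝ) < (q : ℝ) := by linarith
  set lq := Real.log q with hlq_def
  have hlq : 0 < lq := Real.log_pos hq1
  have hl0 : 0 < l := by linarith
  set ε := lq * (1 - l) / (2 * l) with hε_def
  have hε : 0 < ε := div_pos (mul_pos hlq (by linarith)) (by linarith)
  set t := (δ - 1) / (2 * δ) with ht_def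
  have ht : 0 < t := div_pos (by linarith) (by linarith)
  have hc₂0 : (0 : ℝ) < c₂ := by linarith
  set C := c₂ ^ (1 + t) / t with hC_def
  have hCpos : 0 < C := div_pos (Real.rpow_pos_of_pos hc₂0 _) ht
  set c₃ := max 1 ((3 * c₂ / ε) ^ (1 / (δ - 1))) with hc₃_def
  set L₀ := max 1 (max (3 * c₂ * lq / (2 * ε)) ((3 * C / ε) ^ (1 / t))) with hL₀_def
  have hL₀1 : (1 : ℝ) ≤ L₀ := le_max_left _ _
  refine ⟨c₃, Real.exp L₀, le_max_left _ _, ?_, ?_⟩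
  · linarith [Real.add_one_le_exp L₀]
  intro α K hα hK n hn
  have hα1 : 1 < α := lt_of_le_of_lt (le_max_left _ _) hα
  have hα0 : 0 < α := by linarith
  have hK0 : 0 < K := lt_trans (Real.exp_pos _) hK
  have hlnK : L₀ < Real.log K := (Real.lt_log_iff_exp_lt hK0).mpr hK
  have hlnK1 : 1 ≤ Real.log K := le_of_lt (lt_of_le_of_lt hL₀1 hlnK)
  have hlnK0 : 0 < Real.log K := by linarith
  have hαδ1 : 1 ≤ α ^ δ := Real.one_le_rpow (le_of_lt hα1) (by linarith)
  have hαδ0 : 0 < α ^ δ := by linarith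
  have hN0 : (0 : ℝ) < (n : ℝ) := lt_of_lt_of_le (Real.exp_pos _) hn
  set N := (n : ℝ) with hN_def
  set L := Real.log N with hL_def
  have hLge : α ^ δ * Real.log K ≤ L := (Real.le_log_iff_exp_le hN0).mpr hn
  have hLgeK : Real.log K ≤ L := by nlinarith
  have hLgeL₀ : L₀ ≤ L := by linarith
  have hL1 : 1 ≤ L := le_trans hL₀1 hLgeL₀
  have hL0 : 0 < L := by linarith
  have hσ0 : 0 ≤ c₂ * N / L := by positivity
  have hc₂L0 : 0 < c₂ * L := by nlinarith
  have hαδsplit : α ^ δ = α ^ (δ - 1) * α := by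
    have h := Real.rpow_add hα0 (δ - 1) 1
    rw [Real.rpow_one] at h
    rw [← h]
    congr 1
    ring
  have hc₃ge : (3 * c₂ / ε) ^ (1 / (δ - 1)) ≤ c₃ := le_max_right _ _
  have hL₀a : 3 * c₂ * lq / (2 * ε) ≤ L₀ := le_trans (le_max_left _ _) (le_max_right _ _)
  have hL₀b : (3 * C / ε) ^ (1 / t) ≤ L₀ := le_trans (le_max_right _ _) (le_max_right _ _)
  clear_value lq ε t C c₃ L₀ N L
  have hstep1 : (3 * c₂ / ε) ≤ α ^ (δ - 1) := by
    have h1 : (3 * c₂ / ε) ^ (1 / (δ - 1)) ≤ α := le_of_lt (lt_of_le_of_lt hc₃ge hα)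
    have h2 : ((3 * c₂ / ε) ^ (1 / (δ - 1))) ^ (δ - 1) ≤ α ^ (δ - 1) :=
      Real.rpow_le_rpow (Real.rpow_nonneg (by positivity) _) h1 (by linarith)
    rwa [one_div, Real.rpow_inv_rpow (by positivity) (by intro h; linarith [h])] at h2
  have hαδ10 : 0 < α ^ (δ - 1) := lt_of_lt_of_le (by positivity) hstep1
  have h5 : 3 * c₂ ≤ ε * α ^ (δ - 1) := by
    rw [div_le_iff₀ hε] at hstep1
    linarith [hstep1]
  -- rewrite everything as exponentials
  rw [Real.rpow_def_of_pos hK0, Real.rpow_def_of_pos hq0, Real.rpow_def_of_pos hq0,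
    Real.rpow_def_of_pos hc₂L0, ← Real.exp_add, ← Real.exp_add, Real.exp_le_exp, ← hlq_def]
  -- Key bound A : log K term
  have hA : Real.log K * (c₂ * N / L) ≤ ε / 3 * (N / α) := by
    calc Real.log K * (c₂ * N / L) = c₂ * N * Real.log K / L := by ring
      _ ≤ c₂ * N / α ^ δ :=
          aux1 c₂ N (Real.log K) (α ^ δ) L (by positivity) hαδ0 hL0 hLge
      _ = c₂ * N / (α ^ (δ - 1) * α) := by rw [hαδsplit]
      _ ≤ ε / 3 * (N / α) := aux2 c₂ N ε α (α ^ (δ - 1)) hN0.le hα0 hαδ10 h5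
  -- Key bound B : σ/(2α) term
  have hB : lq * (c₂ * N / L / (2 * α)) ≤ ε / 3 * (N / α) := by
    have hLB : 3 * c₂ * lq / (2 * ε) ≤ L := le_trans hL₀a hLgeL₀
    have hLB' : 3 * c₂ * lq ≤ 2 * ε * L := by
      rw [div_le_iff₀ (by linarith : (0:ℝ) < 2 * ε)] at hLB
      linarith [hLB]
    exact aux3 c₂ lq N L ε α hN0.le hL0 hα0 hLB'
  -- Key bound C : log(c₂ L) term
  have hCb : Real.log (c₂ * L) * (c₂ * N / L) ≤ ε / 3 * (N / α) := by
    have ha : 0 < L ^ t := Real.rpow_pos_of_pos hL0 t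
    have hb : 0 < L ^ (1 / δ) := Real.rpow_pos_of_pos hL0 _
    have hu : 0 < c₂ ^ t := Real.rpow_pos_of_pos hc₂0 t
    have hαleb : α ≤ L ^ (1 / δ) := by
      have h1 : α ^ δ ≤ L := by nlinarith
      have h2 : (α ^ δ) ^ δ⁻¹ ≤ L ^ δ⁻¹ :=
        Real.rpow_le_rpow (le_of_lt hαδ0) h1 (by positivity)
      rw [Real.rpow_rpow_inv (le_of_lt hα0) (by intro h; linarith [h])] at h2
      rwa [one_div]
    have hLt : 3 * C / ε ≤ L ^ t := by
      have h1 : (3 * C / ε) ^ (1 / t) ≤ L := le_trans hL₀b hLgeL₀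
      have h2 : ((3 * C / ε) ^ (1 / t)) ^ t ≤ L ^ t :=
        Real.rpow_le_rpow (Real.rpow_nonneg (by positivity) _) h1 (le_of_lt ht)
      rwa [one_div, Real.rpow_inv_rpow (by positivity) (ne_of_gt ht)] at h2
    have hlogle : Real.log (c₂ * L) ≤ c₂ ^ t * L ^ t / t := by
      have h := Real.log_le_rpow_div (le_of_lt hc₂L0) ht
      rwa [Real.mul_rpow (le_of_lt hc₂0) (le_of_lt hL0)] at h
    have hLsplit : L = L ^ t * L ^ (1 / δ) * L ^ t := by
      rw [← Real.rpow_add hL0, ← Real.rpow_add hL0]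
      rw [show t + 1 / δ + t = 1 by rw [ht_def]; field_simp; ring]
      exact (Real.rpow_one L).symm
    have hkey : 3 * c₂ * c₂ ^ t ≤ ε * t * L ^ t := by
      apply aux6 c₂ (c₂ ^ t) t ε (L ^ t) ht hε
      rw [hC_def, show c₂ ^ (1 + t) = c₂ * c₂ ^ t by
        rw [Real.rpow_add hc₂0, Real.rpow_one]] at hLt
      exact hLt
    calc Real.log (c₂ * L) * (c₂ * N / L)
        ≤ (c₂ ^ t * L ^ t / t) * (c₂ * N / L) := mul_le_mul_of_nonneg_right hlogle hσ0
      _ ≤ ε / 3 * (N / L ^ (1 / δ)) :=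
          aux4 (c₂ ^ t) (L ^ t) (L ^ (1 / δ)) t c₂ N ε L ht ha hb hN0.le hLsplit hkey
      _ ≤ ε / 3 * (N / α) := aux5 ε N (L ^ (1 / δ)) α hε.le hN0.le hα0 hαleb
  -- combine
  have hsplit2 : lq * ((N + c₂ * N / L) / (2 * α)) =
      lq * (N / (2 * α)) + lq * (c₂ * N / L / (2 * α)) := by ring
  have hfin : lq * (N / (2 * α)) + 3 * (ε / 3 * (N / α)) = lq * (N / (2 * α * l)) := by
    rw [hε_def]
    field_simp
    ring
  linarith [hA, hB, hCb]
end
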